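/- Let S_Z be an orbital fuzzy iterated function system and u ∈ F*_S. Then for every α ∈ (0,1], the α-level set of the pointwise supremum ∨_{x∈[u]^*} u_x equals the union of the α-level sets: [∨_{x∈[u]^*} u_x]^α = ⋃_{x∈[u]^*} [u_x]^α. -/

import Mathlib

open Metric Filter Topology Set

/-- The orbit of a point `x` under the family of maps `f i`:
`x` together with all images of `x` under finite compositions of the `f i`. -/
def orbitIFS {X I : Type*} (f : I → X → X) (x : X) : Set X :=
  ⋃ l : List I, {l.foldr (fun i y => f i y) x}

/-- The fractal (Hutchinson–Barnsley) operator `K ↦ ⋃ i, f i '' K`. -/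
def fractalOp {X I : Type*} (f : I → X → X) (K : Set X) : Set X :=
  ⋃ i, f i '' K

/-- Image of a fuzzy set under a map: `f(u)(y) = sup_{x ∈ f⁻¹ y} u x` (0 if empty). -/
noncomputable def fuzzyImage {X : Type*} (g : X → X) (u : X → ℝ) : X → ℝ :=
  fun y => sSup (u '' (g ⁻¹' {y}))

/-- The fuzzy Hutchinson–Barnsley operator `Z(u) = ∨ i, ρ i (f i (u))`. -/
noncomputable def Zop {X I : Type*} (f : I → X → X) (ρ : I → ℝ → ℝ) (u : X → ℝ) : X → ℝ :=
  fun y => ⨆ i, ρ i (fuzzyImage (f i) u y)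

/-- The metric `d_∞(u,v) = sup_{α ∈ (0,1]} h([u]^α, [v]^α)`. -/
noncomputable def dInfty {X : Type*} [MetricSpace X] (u v : X → ℝ) : ℝ :=
  ⨆ α : Ioc (0:ℝ) 1, hausdorffDist {x | (α:ℝ) ≤ u x} {x | (α:ℝ) ≤ v x}

/-- The support of a fuzzy set: the closure of `{x | 0 < u x}`. -/
def fsupp {X : Type*} [MetricSpace X] (u : X → ℝ) : Set X := closure {x | 0 < u x}

/-- The crisp fuzzy point `δ_s`. -/
def fdelta {X : Type*} [DecidableEq X] (s : X) : X → ℝ := fun t => if t = s then 1 else 0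

/-- `u^x` : the restriction of `u` to the closure of the orbit of `w` (zero outside). -/
noncomputable def restrictO {X I : Type*} [MetricSpace X] (f : I → X → X) (u : X → ℝ)
    (w : X) : X → ℝ :=
  (closure (orbitIFS f w)).indicator u

/-- A normal compactly supported fuzzy set (with values in `[0,1]`). -/
def IsFuzzyN {X : Type*} [MetricSpace X] (u : X → ℝ) : Prop :=
  (∀ x, u x ∈ Icc (0:ℝ) 1) ∧ (∃ x, u x = 1) ∧ IsCompact (fsupp u)

/-- An upper semicontinuous normal compactly supported fuzzy set: membership in `F*_X`. -/
def IsFuzzyStar {X : Type*} [MetricSpace X] (u : X → ℝ) : Prop :=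
  IsFuzzyN u ∧ UpperSemicontinuous u

/-- Membership in `F*_S`: for each point of positive membership there is an orbit
containing it together with a point of membership one. -/
def InFS {X I : Type*} [MetricSpace X] (f : I → X → X) (u : X → ℝ) : Prop :=
  IsFuzzyStar u ∧ ∀ x, 0 < u x → ∃ w y, x ∈ orbitIFS f w ∧ y ∈ orbitIFS f w ∧ u y = 1

/-- The orbital contraction condition. -/
def OrbitalContr {X I : Type*} [MetricSpace X] (f : I → X → X) (C : ℝ) : Prop :=
  ∀ i x, ∀ y ∈ orbitIFS f x, ∀ z ∈ orbitIFS f x, dist (f i y) (f i z) ≤ C * dist y z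

/-- An admissible system of grey level maps. -/
def Admissible {I : Type*} (ρ : I → ℝ → ℝ) : Prop :=
  (∀ i, ρ i 0 = 0) ∧ (∀ i, MonotoneOn (ρ i) (Icc (0:ℝ) 1)) ∧
  (∀ i, ∀ t ∈ Icc (0:ℝ) 1, ContinuousWithinAt (ρ i) (Ici t) t) ∧
  (∀ i, ∀ t ∈ Icc (0:ℝ) 1, ρ i t ∈ Icc (0:ℝ) 1) ∧ (∃ j, ρ j 1 = 1)

/-!
If `g` is the limit of the Picard iteration started at `x` and `g y > 0`, then the iteration
started at `y` converges levelwise to `g` as well. Indeed, `y` is approximated by points `p` of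
the orbit of `x` lying in a high level set of an iterate from `x`; the `k`-th iterates from `y`
and from `p` are close because only finitely many word maps of length `k` are involved, and the
`k`-th iterate from `p` is `C ^ k * diam (orbit x)`-close to later iterates from `x` by the
orbital contraction. So two limits that are both positive at `y` coincide. Hence all the `u_x`
positive at a given point `y` are one and the same function, the supremum at `y` is attained,
and the level sets of the supremum are the unions of the level sets.
-/

section WordMap

variable {X I : Type*}

def wordMap (f : I → X → X) (l : List I) (x : X) : X :=
  l.foldr (fun i y => f i y) x

variable (f : I → X → X)

@[simp] lemma wordMap_nil (x : X) : wordMap f [] x = x := rfl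

@[simp] lemma wordMap_cons (i : I) (l : List I) (x : X) :
    wordMap f (i :: l) x = f i (wordMap f l x) := rfl

lemma wordMap_append (l₁ l₂ : List I) (x : X) :
    wordMap f (l₁ ++ l₂) x = wordMap f l₁ (wordMap f l₂ x) :=
  List.foldr_append ..

lemma wordMap_replicate_of_fixed {j : I} {x : X} (h : f j x = x) (n : ℕ) :
    wordMap f (List.replicate n j) x = x := by
  induction n with
  | zero => rfl
  | succ n ih => rw [List.replicate_succ, wordMap_cons, ih, h]

lemma mem_orbitIFS {x w : X} : w ∈ orbitIFS f x ↔ ∃ l, wordMap f l x = w := by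
  simp [orbitIFS, wordMap, eq_comm]

lemma wordMap_mem_orbitIFS (l : List I) (x : X) : wordMap f l x ∈ orbitIFS f x :=
  (mem_orbitIFS f).2 ⟨l, rfl⟩

lemma wordMap_mem_orbitIFS_of_mem {x w : X} (hw : w ∈ orbitIFS f x) (l : List I) :
    wordMap f l w ∈ orbitIFS f x := by
  obtain ⟨l', rfl⟩ := (mem_orbitIFS f).1 hw
  rw [← wordMap_append]
  exact wordMap_mem_orbitIFS f _ x

lemma wordMap_continuous [TopologicalSpace X] {f : I → X → X} (hf : ∀ i, Continuous (f i))
    (l : List I) : Continuous (wordMap f l) := by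
  induction l with
  | nil => exact continuous_id
  | cons i l ih => exact (hf i).comp ih

end WordMap

/-! The grey level attached to a word `l` is `wordMap ρ l 1`. -/

section GreyLevel

variable {I : Type*} {ρ : I → ℝ → ℝ} (hρ : Admissible ρ)
include hρ

lemma wordMap_mem_Icc (l : List I) {t : ℝ} (ht : t ∈ Icc (0:ℝ) 1) :
    wordMap ρ l t ∈ Icc (0:ℝ) 1 := by
  induction l with
  | nil => exact ht
  | cons i l ih => exact hρ.2.2.2.1 i _ ih

lemma wordMap_append_one_le (l₁ l₂ : List I) :
    wordMap ρ (l₁ ++ l₂) 1 ≤ wordMap ρ l₁ 1 := by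
  rw [wordMap_append]
  induction l₁ with
  | nil => exact (wordMap_mem_Icc hρ l₂ ⟨zero_le_one, le_rfl⟩).2
  | cons i l ih =>
    exact hρ.2.1 i (wordMap_mem_Icc hρ l (wordMap_mem_Icc hρ l₂ ⟨zero_le_one, le_rfl⟩))
      (wordMap_mem_Icc hρ l ⟨zero_le_one, le_rfl⟩) ih

end GreyLevel

section OrbitalContraction

variable {X I : Type*} [MetricSpace X] {f : I → X → X} {C : ℝ}

lemma dist_wordMap_le (hC0 : 0 ≤ C) (horb : OrbitalContr f C) {x w w' : X}
    (hw : w ∈ orbitIFS f x) (hw' : w' ∈ orbitIFS f x) (l : List I) :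
    dist (wordMap f l w) (wordMap f l w') ≤ C ^ l.length * dist w w' := by
  induction l with
  | nil => simp
  | cons i l ih =>
    calc dist (wordMap f (i :: l) w) (wordMap f (i :: l) w')
        ≤ C * dist (wordMap f l w) (wordMap f l w') :=
          horb i x _ (wordMap_mem_orbitIFS_of_mem f hw l) _ (wordMap_mem_orbitIFS_of_mem f hw' l)
      _ ≤ C * (C ^ l.length * dist w w') := mul_le_mul_of_nonneg_left ih hC0
      _ = C ^ (i :: l).length * dist w w' := by rw [List.length_cons, pow_succ]; ring

lemma isBounded_orbitIFS [Finite I] (hC0 : 0 ≤ C) (hC1 : C < 1) (horb : OrbitalContr f C)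
    (x : X) : Bornology.IsBounded (orbitIFS f x) := by
  obtain ⟨M₀, hM₀⟩ := (finite_range fun i => dist x (f i x)).bddAbove
  set M := max M₀ 0
  have hstep : ∀ i, dist x (f i x) ≤ M := fun i => (hM₀ ⟨i, rfl⟩).trans (le_max_left _ _)
  have h1C : 0 < 1 - C := by linarith
  -- the orbit lies in the ball of radius `M / (1 - C)`, the fixed point of `R ↦ M + C * R`
  refine (isBounded_closedBall (x := x) (r := M / (1 - C))).subset fun w hw => ?_
  obtain ⟨l, rfl⟩ := (mem_orbitIFS f).1 hw
  rw [mem_closedBall, dist_comm]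
  clear hw
  induction l with
  | nil => simpa using div_nonneg (le_max_right M₀ 0) h1C.le
  | cons i l ih =>
    calc dist x (wordMap f (i :: l) x) ≤ dist x (f i x) + dist (f i x) (f i (wordMap f l x)) :=
          dist_triangle _ _ _
      _ ≤ M + C * (M / (1 - C)) := by
          gcongr
          · exact hstep i
          · exact (horb i x x (wordMap_mem_orbitIFS f [] x) _ (wordMap_mem_orbitIFS f l x)).trans
              (mul_le_mul_of_nonneg_left ih hC0)
      _ = M / (1 - C) := by field_simp; ring

end OrbitalContraction

section HausdorffDist

variable {X : Type*} [MetricSpace X]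

lemma hausdorffDist_le_diam_of_subset {s t K : Set X} (hK : Bornology.IsBounded K)
    (hs : s ⊆ K) (ht : t ⊆ K) : hausdorffDist s t ≤ diam K := by
  rcases s.eq_empty_or_nonempty with rfl | hs'
  · simpa using diam_nonneg
  rcases t.eq_empty_or_nonempty with rfl | ht'
  · simpa using diam_nonneg
  exact (hausdorffDist_le_diam hs' (hK.subset hs) ht' (hK.subset ht)).trans
    (diam_mono (union_subset hs ht) hK)

lemma hausdorffDist_image_le {α : Type*} {F G : α → X} {S : Set α} {r : ℝ} (hr : 0 ≤ r)
    (h : ∀ a ∈ S, dist (F a) (G a) ≤ r) : hausdorffDist (F '' S) (G '' S) ≤ r :=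
  hausdorffDist_le_of_mem_dist hr
    (fun _ ⟨a, ha, hFa⟩ => ⟨G a, mem_image_of_mem G ha, hFa ▸ h a ha⟩)
    (fun _ ⟨a, ha, hGa⟩ =>
      ⟨F a, mem_image_of_mem F ha, hGa ▸ dist_comm (F a) (G a) ▸ h a ha⟩)

lemma eq_of_tendsto_hausdorffDist {ι : Type*} {l : Filter ι} [l.NeBot] {s : ι → Set X}
    {A B : Set X} (hA : IsClosed A) (hB : IsClosed B) (hAB : hausdorffEDist A B ≠ ⊤)
    (hsA : ∀ i, hausdorffEDist A (s i) ≠ ⊤)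
    (htA : Tendsto (fun i => hausdorffDist (s i) A) l (𝓝 0))
    (htB : Tendsto (fun i => hausdorffDist (s i) B) l (𝓝 0)) : A = B := by
  refine (hA.hausdorffDist_zero_iff_eq hB hAB).1 (le_antisymm ?_ hausdorffDist_nonneg)
  refine ge_of_tendsto (by simpa using htA.add htB) (Eventually.of_forall fun i => ?_)
  calc hausdorffDist A B ≤ hausdorffDist A (s i) + hausdorffDist (s i) B :=
        hausdorffDist_triangle (hsA i)
    _ = hausdorffDist (s i) A + hausdorffDist (s i) B := by rw [hausdorffDist_comm]

end HausdorffDist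

section LevelSet

variable {X : Type*} {u v : X → ℝ} {α β : ℝ}

def levelSet (u : X → ℝ) (α : ℝ) : Set X := {x | α ≤ u x}

@[simp] lemma mem_levelSet {x : X} : x ∈ levelSet u α ↔ α ≤ u x := Iff.rfl

lemma le_of_levelSet_subset (hu : ∀ x, u x ≤ 1) (hv : ∀ x, 0 ≤ v x)
    (h : ∀ α ∈ Ioc (0:ℝ) 1, levelSet u α ⊆ levelSet v α) : u ≤ v := by
  intro x
  rcases le_or_gt (u x) 0 with h0 | hpos
  · exact h0.trans (hv x)
  · exact h _ ⟨hpos, hu x⟩ (mem_levelSet.2 le_rfl)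

lemma eq_of_levelSet_eq (hu : ∀ x, u x ∈ Icc (0:ℝ) 1) (hv : ∀ x, v x ∈ Icc (0:ℝ) 1)
    (h : ∀ α ∈ Ioc (0:ℝ) 1, levelSet u α = levelSet v α) : u = v :=
  le_antisymm
    (le_of_levelSet_subset (fun x => (hu x).2) (fun x => (hv x).1) fun α hα => (h α hα).le)
    (le_of_levelSet_subset (fun x => (hv x).2) (fun x => (hu x).1) fun α hα => (h α hα).ge)

variable [MetricSpace X]

lemma levelSet_subset_fsupp (hα : 0 < α) : levelSet u α ⊆ fsupp u :=
  fun _ hx => subset_closure (hα.trans_le hx)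

namespace IsFuzzyN

lemma levelSet_nonempty (hu : IsFuzzyN u) (hα : α ≤ 1) : (levelSet u α).Nonempty := by
  obtain ⟨x, hx⟩ := hu.2.1
  exact ⟨x, by simpa [hx] using hα⟩

lemma isBounded_levelSet (hu : IsFuzzyN u) (hα : 0 < α) : Bornology.IsBounded (levelSet u α) :=
  hu.2.2.isBounded.subset (levelSet_subset_fsupp hα)

lemma hausdorffEDist_levelSet_ne_top (hu : IsFuzzyN u) (hv : IsFuzzyN v)
    (hα : α ∈ Ioc (0:ℝ) 1) (hβ : β ∈ Ioc (0:ℝ) 1) :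
    hausdorffEDist (levelSet u α) (levelSet v β) ≠ ⊤ :=
  hausdorffEDist_ne_top_of_nonempty_of_bounded (hu.levelSet_nonempty hα.2)
    (hv.levelSet_nonempty hβ.2) (hu.isBounded_levelSet hα.1) (hv.isBounded_levelSet hβ.1)

lemma hausdorffDist_levelSet_le_dInfty (hu : IsFuzzyN u) (hv : IsFuzzyN v)
    (hα : α ∈ Ioc (0:ℝ) 1) :
    hausdorffDist (levelSet u α) (levelSet v α) ≤ dInfty u v := by
  have hK : Bornology.IsBounded (fsupp u ∪ fsupp v) :=
    hu.2.2.isBounded.union hv.2.2.isBounded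
  refine le_ciSup (f := fun β : Ioc (0:ℝ) 1 => hausdorffDist (levelSet u β) (levelSet v β))
    ⟨diam (fsupp u ∪ fsupp v), ?_⟩ ⟨α, hα⟩
  rintro _ ⟨β, rfl⟩
  exact hausdorffDist_le_diam_of_subset hK
    ((levelSet_subset_fsupp β.2.1).trans subset_union_left)
    ((levelSet_subset_fsupp β.2.1).trans subset_union_right)

end IsFuzzyN

end LevelSet

section FuzzyOperator

variable {X I : Type*} {g : X → X} {u : X → ℝ}

lemma fuzzyImage_mem_Icc (hu : ∀ x, u x ∈ Icc (0:ℝ) 1) (y : X) :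
    fuzzyImage g u y ∈ Icc (0:ℝ) 1 := by
  have hbdd : BddAbove (u '' (g ⁻¹' {y})) := ⟨1, by rintro _ ⟨x, -, rfl⟩; exact (hu x).2⟩
  rcases (u '' (g ⁻¹' {y})).eq_empty_or_nonempty with h | h
  · simp [fuzzyImage, h]
  · obtain ⟨_, x, hx, rfl⟩ := h
    exact ⟨(hu x).1.trans (le_csSup hbdd ⟨x, hx, rfl⟩),
      csSup_le ⟨_, x, hx, rfl⟩ (by rintro _ ⟨x', -, rfl⟩; exact (hu x').2)⟩

lemma le_fuzzyImage (hu : BddAbove (range u)) (x : X) : u x ≤ fuzzyImage g u (g x) :=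
  le_csSup (hu.mono (image_subset_range _ _)) ⟨x, rfl, rfl⟩

lemma fuzzyImage_eq_zero_or_exists (hu : (range u).Finite) (y : X) :
    fuzzyImage g u y = 0 ∨ ∃ x, g x = y ∧ fuzzyImage g u y = u x := by
  rcases (u '' (g ⁻¹' {y})).eq_empty_or_nonempty with h | h
  · left; simp [fuzzyImage, h]
  · obtain ⟨x, hx, hxv⟩ := h.csSup_mem (hu.subset (image_subset_range _ _))
    exact Or.inr ⟨x, hx, hxv.symm⟩

variable [Finite I] (f : I → X → X) {ρ : I → ℝ → ℝ}

lemma le_Zop (i : I) (y : X) : ρ i (fuzzyImage (f i) u y) ≤ Zop f ρ u y :=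
  le_ciSup (f := fun i => ρ i (fuzzyImage (f i) u y)) (finite_range _).bddAbove i

lemma exists_Zop_eq [Nonempty I] (y : X) : ∃ i, Zop f ρ u y = ρ i (fuzzyImage (f i) u y) :=
  (exists_eq_ciSup_of_finite).imp fun _ h => h.symm

lemma Zop_mem_Icc [Nonempty I] (hρ : Admissible ρ) (hu : ∀ x, u x ∈ Icc (0:ℝ) 1) (y : X) :
    Zop f ρ u y ∈ Icc (0:ℝ) 1 := by
  obtain ⟨i, hi⟩ := exists_Zop_eq f y (ρ := ρ) (u := u)
  exact hi ▸ hρ.2.2.2.1 i _ (fuzzyImage_mem_Icc hu y)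

end FuzzyOperator

section Picard

variable {X I : Type*} [DecidableEq X] (f : I → X → X) (ρ : I → ℝ → ℝ)

noncomputable def picard (n : ℕ) (x : X) : X → ℝ := (Zop f ρ)^[n] (fdelta x)

lemma picard_succ (n : ℕ) (x : X) : picard f ρ (n + 1) x = Zop f ρ (picard f ρ n x) :=
  Function.iterate_succ_apply' ..

variable {ρ} [Finite I] [Nonempty I] (hρ : Admissible ρ)
include hρ

lemma picard_mem_Icc (n : ℕ) (x y : X) : picard f ρ n x y ∈ Icc (0:ℝ) 1 := by
  induction n generalizing y with
  | zero => by_cases h : y = x <;> simp [picard, fdelta, h]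
  | succ n ih => rw [picard_succ]; exact Zop_mem_Icc f hρ ih y

lemma wordMap_le_picard (l : List I) (x : X) :
    wordMap ρ l 1 ≤ picard f ρ l.length x (wordMap f l x) := by
  induction l with
  | nil => simp [picard, fdelta]
  | cons i l ih =>
    have hbdd : BddAbove (range (picard f ρ l.length x)) :=
      ⟨1, by rintro _ ⟨y, rfl⟩; exact (picard_mem_Icc f hρ _ x y).2⟩
    rw [List.length_cons, picard_succ, wordMap_cons, wordMap_cons]
    exact (hρ.2.1 i (wordMap_mem_Icc hρ l ⟨zero_le_one, le_rfl⟩)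
      (fuzzyImage_mem_Icc (picard_mem_Icc f hρ _ x) _) (ih.trans (le_fuzzyImage hbdd _))).trans
      (le_Zop f i _)

lemma picard_mem_insert_zero (n : ℕ) (x y : X) :
    picard f ρ n x y ∈
      insert 0 ((wordMap ρ · 1) '' {l : List I | l.length = n ∧ wordMap f l x = y}) := by
  induction n generalizing y with
  | zero =>
    by_cases h : y = x
    · exact Or.inr ⟨[], ⟨rfl, h.symm⟩, by simp [picard, fdelta, h]⟩
    · exact Or.inl (by simp [picard, fdelta, h])
  | succ n ih =>
    have hfin : (range (picard f ρ n x)).Finite := by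
      refine (((List.finite_length_eq I n).image (wordMap ρ · 1)).insert 0).subset ?_
      rintro _ ⟨z, rfl⟩
      rcases ih z with h0 | ⟨l, ⟨hl, -⟩, hlz⟩
      · exact Or.inl h0
      · exact Or.inr ⟨l, hl, hlz⟩
    obtain ⟨i, hi⟩ := exists_Zop_eq f y (ρ := ρ) (u := picard f ρ n x)
    rw [picard_succ, hi]
    rcases fuzzyImage_eq_zero_or_exists (g := f i) hfin y with h0 | ⟨z, rfl, hz⟩
    · exact Or.inl (by rw [h0, hρ.1 i])
    rw [hz]
    rcases ih z with h0 | ⟨l, ⟨hl, rfl⟩, hlz⟩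
    · exact Or.inl (by rw [show picard f ρ n x _ = 0 from h0, hρ.1 i])
    · exact Or.inr ⟨i :: l, ⟨by simp [hl], rfl⟩, by simp [hlz]⟩

lemma levelSet_picard {β : ℝ} (hβ : 0 < β) (n : ℕ) (x : X) :
    levelSet (picard f ρ n x) β =
      (wordMap f · x) '' {l : List I | l.length = n ∧ β ≤ wordMap ρ l 1} := by
  ext y
  constructor
  · intro hy
    rcases picard_mem_insert_zero f hρ n x y with h0 | ⟨l, ⟨hl, rfl⟩, hlv⟩
    · exact absurd (hβ.trans_le hy).ne' (by simpa using h0)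
    · exact ⟨l, ⟨hl, (mem_levelSet.1 hy).trans_eq hlv.symm⟩, rfl⟩
  · rintro ⟨l, ⟨rfl, hl⟩, rfl⟩
    exact hl.trans (wordMap_le_picard f hρ l x)

lemma levelSet_picard_subset_orbitIFS {β : ℝ} (hβ : 0 < β) (n : ℕ) (x : X) :
    levelSet (picard f ρ n x) β ⊆ orbitIFS f x := by
  rw [levelSet_picard f hρ hβ]
  rintro _ ⟨l, -, rfl⟩
  exact wordMap_mem_orbitIFS f l x

variable [MetricSpace X]

lemma isFuzzyN_picard (n : ℕ) (x : X) : IsFuzzyN (picard f ρ n x) := by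
  obtain ⟨j, hj⟩ := hρ.2.2.2.2
  have hfin : ((wordMap f · x) '' {l : List I | l.length = n}).Finite :=
    (List.finite_length_eq I n).image _
  refine ⟨picard_mem_Icc f hρ n x, ⟨wordMap f (List.replicate n j) x,
    le_antisymm (picard_mem_Icc f hρ n x _).2 ?_⟩, ?_⟩
  · simpa [wordMap_replicate_of_fixed ρ hj] using wordMap_le_picard f hρ (List.replicate n j) x
  · refine hfin.isCompact.of_isClosed_subset isClosed_closure
      (closure_minimal (fun y hy => ?_) hfin.isClosed)
    rcases picard_mem_insert_zero f hρ n x y with h0 | ⟨l, ⟨hl, rfl⟩, -⟩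
    · exact absurd (show picard f ρ n x y = 0 from h0) (ne_of_gt hy)
    · exact ⟨l, hl, rfl⟩

end Picard

section LevelwiseConvergence

variable {X I : Type*} [MetricSpace X] [DecidableEq X] [Finite I] [Nonempty I]
  {f : I → X → X} {ρ : I → ℝ → ℝ} (hρ : Admissible ρ) {C β : ℝ}
include hρ

lemma tendsto_hausdorffDist_levelSet_picard {g : X → ℝ} {x : X} (hg : IsFuzzyN g)
    (ht : Tendsto (fun n => dInfty (picard f ρ n x) g) atTop (𝓝 0))
    (hβ : β ∈ Ioc (0:ℝ) 1) :
    Tendsto (fun n => hausdorffDist (levelSet (picard f ρ n x) β) (levelSet g β))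
      atTop (𝓝 0) :=
  squeeze_zero (fun _ => hausdorffDist_nonneg)
    (fun n => (isFuzzyN_picard f hρ n x).hausdorffDist_levelSet_le_dInfty hg hβ) ht

lemma eventually_hausdorffDist_levelSet_picard_le (hf : ∀ i, Continuous (f i)) (hβ : 0 < β)
    (k : ℕ) (y : X) {ε : ℝ} (hε : 0 < ε) :
    ∀ᶠ p in 𝓝 y,
      hausdorffDist (levelSet (picard f ρ k p) β) (levelSet (picard f ρ k y) β) ≤ ε := by
  have hnear : ∀ᶠ p in 𝓝 y, ∀ l ∈ {l : List I | l.length = k},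
      dist (wordMap f l p) (wordMap f l y) < ε :=
    (eventually_all_finite (List.finite_length_eq I k)).2 fun l _ =>
      Metric.tendsto_nhds.1 ((wordMap_continuous hf l).tendsto y) ε hε
  filter_upwards [hnear] with p hp
  rw [levelSet_picard f hρ hβ, levelSet_picard f hρ hβ]
  exact hausdorffDist_image_le hε.le fun l hl => (hp l hl.1).le

lemma hausdorffDist_levelSet_picard_le_of_mem_orbitIFS (hC0 : 0 ≤ C)
    (horb : OrbitalContr f C) (hβ : 0 < β) {x p : X} (hp : p ∈ orbitIFS f x) {D : ℝ}
    (hD : ∀ w ∈ orbitIFS f x, dist p w ≤ D) (k n : ℕ) :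
    hausdorffDist (levelSet (picard f ρ k p) β) (levelSet (picard f ρ (n + k) x) β)
      ≤ C ^ k * D := by
  obtain ⟨j, hj⟩ := hρ.2.2.2.2
  have hbound : ∀ l : List I, l.length = k → ∀ w ∈ orbitIFS f x,
      dist (wordMap f l p) (wordMap f l w) ≤ C ^ k * D := fun l hl w hw =>
    (dist_wordMap_le hC0 horb hp hw l).trans
      (hl ▸ mul_le_mul_of_nonneg_left (hD w hw) (pow_nonneg hC0 _))
  have hD0 : 0 ≤ D := dist_self p ▸ hD p hp
  rw [levelSet_picard f hρ hβ, levelSet_picard f hρ hβ]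
  apply hausdorffDist_le_of_mem_dist (mul_nonneg (pow_nonneg hC0 k) hD0)
  · -- pad the word with `n` letters of grey level one
    rintro _ ⟨l, ⟨hl, hlβ⟩, rfl⟩
    refine ⟨_, ⟨l ++ List.replicate n j, ⟨by simp [hl, add_comm], ?_⟩, rfl⟩, ?_⟩
    · rwa [wordMap_append, wordMap_replicate_of_fixed ρ hj]
    · dsimp only
      rw [wordMap_append]
      exact hbound l hl _ (wordMap_mem_orbitIFS f _ x)
  · -- keep the first `k` letters of the word
    rintro _ ⟨l, ⟨hl, hlβ⟩, rfl⟩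
    have hsplit : wordMap f l x = wordMap f (l.take k) (wordMap f (l.drop k) x) := by
      rw [← wordMap_append, List.take_append_drop]
    have hlen : (l.take k).length = k := by simp [hl]
    refine ⟨_, ⟨l.take k, ⟨hlen, hlβ.trans ?_⟩, rfl⟩, ?_⟩
    · simpa only [List.take_append_drop] using wordMap_append_one_le hρ (l.take k) (l.drop k)
    · dsimp only
      rw [hsplit, dist_comm]
      exact hbound _ hlen _ (wordMap_mem_orbitIFS f _ x)

lemma hausdorffDist_levelSet_picard_le (hf : ∀ i, Continuous (f i)) (hC0 : 0 ≤ C)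
    (horb : OrbitalContr f C) {g : X → ℝ} {x y : X} (hg : IsFuzzyN g)
    (ht : Tendsto (fun n => dInfty (picard f ρ n x) g) atTop (𝓝 0)) (hy : 0 < g y) {D : ℝ}
    (hD : ∀ ⦃w⦄, w ∈ orbitIFS f x → ∀ ⦃w'⦄, w' ∈ orbitIFS f x → dist w w' ≤ D)
    (hβ : β ∈ Ioc (0:ℝ) 1) (k : ℕ) :
    hausdorffDist (levelSet (picard f ρ k y) β) (levelSet g β) ≤ C ^ k * D := by
  refine le_of_forall_pos_le_add fun ε hε => ?_
  have hγ : g y ∈ Ioc (0:ℝ) 1 := ⟨hy, (hg.1 y).2⟩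
  obtain ⟨δ, hδ, hnear⟩ := Metric.eventually_nhds_iff.1
    (eventually_hausdorffDist_levelSet_picard_le hρ hf hβ.1 k y (half_pos hε))
  obtain ⟨n, hnγ, hnβ⟩ :=
    (((tendsto_hausdorffDist_levelSet_picard hρ hg ht hγ).eventually_lt_const hδ).and
      (((tendsto_add_atTop_iff_nat k).2 (tendsto_hausdorffDist_levelSet_picard hρ hg ht hβ)
        ).eventually_lt_const (half_pos hε))).exists
  obtain ⟨p, hp, hpy⟩ := exists_dist_lt_of_hausdorffDist_lt' (mem_levelSet.2 le_rfl) hnγ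
    ((isFuzzyN_picard f hρ n x).hausdorffEDist_levelSet_ne_top hg hγ hγ)
  have hp_orbit : p ∈ orbitIFS f x := levelSet_picard_subset_orbitIFS f hρ hγ.1 n x hp
  calc hausdorffDist (levelSet (picard f ρ k y) β) (levelSet g β)
      ≤ hausdorffDist (levelSet (picard f ρ k y) β) (levelSet (picard f ρ k p) β)
        + (hausdorffDist (levelSet (picard f ρ k p) β) (levelSet (picard f ρ (n + k) x) β)
          + hausdorffDist (levelSet (picard f ρ (n + k) x) β) (levelSet g β)) :=
        (hausdorffDist_triangle ((isFuzzyN_picard f hρ k y).hausdorffEDist_levelSet_ne_top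
          (isFuzzyN_picard f hρ k p) hβ hβ)).trans (add_le_add le_rfl (hausdorffDist_triangle
          ((isFuzzyN_picard f hρ k p).hausdorffEDist_levelSet_ne_top
            (isFuzzyN_picard f hρ (n + k) x) hβ hβ)))
    _ ≤ ε / 2 + (C ^ k * D + ε / 2) := by
        gcongr
        · rw [hausdorffDist_comm]; exact hnear hpy
        · exact hausdorffDist_levelSet_picard_le_of_mem_orbitIFS hρ hC0 horb hβ.1 hp_orbit
            (fun w hw => hD hp_orbit hw) k n
    _ = C ^ k * D + ε := by ring

lemma tendsto_hausdorffDist_levelSet_picard_of_pos (hf : ∀ i, Continuous (f i)) (hC0 : 0 ≤ C)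
    (hC1 : C < 1) (horb : OrbitalContr f C) {g : X → ℝ} {x y : X} (hg : IsFuzzyN g)
    (ht : Tendsto (fun n => dInfty (picard f ρ n x) g) atTop (𝓝 0)) (hy : 0 < g y)
    (hβ : β ∈ Ioc (0:ℝ) 1) :
    Tendsto (fun k => hausdorffDist (levelSet (picard f ρ k y) β) (levelSet g β))
      atTop (𝓝 0) := by
  obtain ⟨D, hD⟩ := isBounded_iff.1 (isBounded_orbitIFS hC0 hC1 horb x)
  refine squeeze_zero (fun _ => hausdorffDist_nonneg)
    (hausdorffDist_levelSet_picard_le hρ hf hC0 horb hg ht hy hD hβ) ?_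
  simpa using (tendsto_pow_atTop_nhds_zero_of_lt_one hC0 hC1).mul_const D

lemma eq_of_tendsto_dInfty_picard (hf : ∀ i, Continuous (f i)) (hC0 : 0 ≤ C) (hC1 : C < 1)
    (horb : OrbitalContr f C) {g₁ g₂ : X → ℝ} {x₁ x₂ y : X}
    (hg₁ : IsFuzzyStar g₁) (hg₂ : IsFuzzyStar g₂)
    (ht₁ : Tendsto (fun n => dInfty (picard f ρ n x₁) g₁) atTop (𝓝 0))
    (ht₂ : Tendsto (fun n => dInfty (picard f ρ n x₂) g₂) atTop (𝓝 0))
    (hy₁ : 0 < g₁ y) (hy₂ : 0 < g₂ y) : g₁ = g₂ :=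
  eq_of_levelSet_eq hg₁.1.1 hg₂.1.1 fun _ hβ =>
    eq_of_tendsto_hausdorffDist (l := atTop) (hg₁.2.isClosed_preimage _)
      (hg₂.2.isClosed_preimage _) (hg₁.1.hausdorffEDist_levelSet_ne_top hg₂.1 hβ hβ)
      (fun k => hg₁.1.hausdorffEDist_levelSet_ne_top (isFuzzyN_picard f hρ k y) hβ hβ)
      (tendsto_hausdorffDist_levelSet_picard_of_pos hρ hf hC0 hC1 horb hg₁.1 ht₁ hy₁ hβ)
      (tendsto_hausdorffDist_levelSet_picard_of_pos hρ hf hC0 hC1 horb hg₂.1 ht₂ hy₂ hβ)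

end LevelwiseConvergence

theorem stmt9_general {X I : Type*} [MetricSpace X] [DecidableEq X]
    [Finite I] [Nonempty I]
    (f : I → X → X) (hcont : ∀ i, Continuous (f i))
    (C : ℝ) (hC0 : 0 ≤ C) (hC1 : C < 1) (horb : OrbitalContr f C)
    (ρ : I → ℝ → ℝ) (hρ : Admissible ρ)
    (u : X → ℝ)
    (U : X → X → ℝ) (hUStar : ∀ x, 0 < u x → InFS f (U x))
    (hU : ∀ x, 0 < u x →
      Tendsto (fun n => dInfty ((Zop f ρ)^[n] (fdelta x)) (U x)) atTop (nhds 0)) :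
    ∀ α ∈ Ioc (0:ℝ) 1,
      {y | α ≤ ⨆ x : {x // 0 < u x}, U x.1 y} =
        ⋃ x : {x // 0 < u x}, {y | α ≤ U x.1 y} := by
  intro α hα
  ext y
  simp only [mem_iUnion]
  refine ⟨fun h => ?_, fun ⟨x, hx⟩ =>
    hx.trans (le_ciSup (f := fun x : {x // 0 < u x} => U x.1 y) ?_ x)⟩
  · obtain ⟨x₁, hx₁⟩ : ∃ x : {x // 0 < u x}, 0 < U x.1 y := by
      by_contra! hle
      exact (hα.1.trans_le h).not_ge (Real.iSup_nonpos hle)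
    -- every `U x` positive at `y` is `U x₁`, so the supremum is attained at `x₁`
    refine ⟨x₁, h.trans (Real.iSup_le (fun x => ?_) hx₁.le)⟩
    rcases le_or_gt (U x.1 y) 0 with hle | hpos
    · exact hle.trans hx₁.le
    · rw [eq_of_tendsto_dInfty_picard hρ hcont hC0 hC1 horb (hUStar x.1 x.2).1
        (hUStar x₁.1 x₁.2).1 (hU x.1 x.2) (hU x₁.1 x₁.2) hpos hx₁]
  · exact ⟨1, forall_mem_range.2 fun x => ((hUStar x.1 x.2).1.1.1 y).2⟩

/-- Proposition 3.4: the α-level set of `∨_{x ∈ [u]^*} u_x` is the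
union of the α-level sets. -/
theorem stmt9 {X I : Type*} [MetricSpace X] [CompleteSpace X] [DecidableEq X]
    [Finite I] [Nonempty I]
    (f : I → X → X) (hcont : ∀ i, Continuous (f i))
    (C : ℝ) (hC0 : 0 ≤ C) (hC1 : C < 1) (horb : OrbitalContr f C)
    (ρ : I → ℝ → ℝ) (hρ : Admissible ρ)
    (u : X → ℝ) (hu : InFS f u)
    (U : X → X → ℝ) (hUStar : ∀ x, 0 < u x → InFS f (U x))
    (hU : ∀ x, 0 < u x →
      Tendsto (fun n => dInfty ((Zop f ρ)^[n] (fdelta x)) (U x)) atTop (nhds 0)) :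
    ∀ α ∈ Ioc (0:ℝ) 1,
      {y | α ≤ ⨆ x : {x // 0 < u x}, U x.1 y} =
        ⋃ x : {x // 0 < u x}, {y | α ≤ U x.1 y} :=
  stmt9_general f hcont C hC0 hC1 horb ρ hρ u U hUStar hU
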